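/- Let G be a finite group, K a component of G, and N a subnormal subgroup of G. Then either K ≤ N or [K, N] = 1. -/

import Mathlib

def normalIn {G : Type*} [Group G] (H K : Subgroup G) : Prop :=
  H ≤ K ∧ ∀ k ∈ K, ∀ h ∈ H, k * h * k⁻¹ ∈ H

def subnormalIn {G : Type*} [Group G] (H K : Subgroup G) : Prop :=
  Relation.ReflTransGen normalIn H K

def IsSubnormal {G : Type*} [Group G] (H : Subgroup G) : Prop :=
  subnormalIn H ⊤

def IsQuasisimple (H : Type*) [Group H] : Prop :=
  commutator H = ⊤ ∧ IsSimpleGroup (H ⧸ Subgroup.center H)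

def IsComponent {G : Type*} [Group G] (K : Subgroup G) : Prop :=
  IsSubnormal K ∧ IsQuasisimple ↥K

open Subgroup

lemma subnormalIn_le {G : Type*} [Group G] {H K : Subgroup G} (h : subnormalIn H K) : H ≤ K := by
  induction h with
  | refl => exact le_rfl
  | tail _ h2 ih => exact ih.trans h2.1

lemma normalIn_inf {G : Type*} [Group G] {H K : Subgroup G} (M : Subgroup G)
    (h : normalIn H K) : normalIn (H ⊓ M) (K ⊓ M) := by
  refine ⟨inf_le_inf_right M h.1, ?_⟩
  intro k hk x hx
  rw [Subgroup.mem_inf] at hk hx ⊢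
  exact ⟨h.2 k hk.1 x hx.1, mul_mem (mul_mem hk.2 hx.2) (inv_mem hk.2)⟩

lemma subnormalIn_inf {G : Type*} [Group G] {H K : Subgroup G} (M : Subgroup G)
    (h : subnormalIn H K) : subnormalIn (H ⊓ M) (K ⊓ M) := by
  induction h with
  | refl => exact Relation.ReflTransGen.refl
  | tail _ h2 ih => exact ih.tail (normalIn_inf M h2)

/-- A quasisimple subgroup is perfect as a subgroup. -/
lemma commutator_self_eq {G : Type*} [Group G] {K : Subgroup G}
    (hq : IsQuasisimple ↥K) : ⁅K, K⁆ = K := by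
  have h := hq.1
  have h2 := congrArg (Subgroup.map K.subtype) h
  rw [commutator_def, Subgroup.map_commutator] at h2
  rwa [← MonoidHom.range_eq_map, Subgroup.range_subtype] at h2

/-- If `M` is normal in quasisimple `K` and `K ≰ M`, then `[K, M] = 1`. -/
lemma quasi_central {G : Type*} [Group G] {K M : Subgroup G} (hq : IsQuasisimple ↥K)
    (hM : normalIn M K) (hKM : ¬ K ≤ M) : ⁅K, M⁆ = ⊥ := by
  haveI := hq.2
  set M' := M.subgroupOf K with hM'
  have hn : M'.Normal := by
    constructor
    rintro ⟨m, hmK⟩ hm ⟨k, hkK⟩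
    simp only [hM', Subgroup.mem_subgroupOf] at hm ⊢
    exact hM.2 k hkK m hm
  set q := QuotientGroup.mk' (Subgroup.center ↥K) with hqdef
  rcases (hn.map q (QuotientGroup.mk'_surjective _)).eq_bot_or_eq_top with hbot | htop
  · -- M' is central in K
    have hcen : ∀ x : ↥K, x ∈ M' → x ∈ Subgroup.center ↥K := by
      intro x hx
      have hx1 : q x = 1 := by
        have : q x ∈ Subgroup.map q M' := ⟨x, hx, rfl⟩
        rw [hbot] at this
        simpa using this
      rwa [← QuotientGroup.ker_mk' (Subgroup.center ↥K), MonoidHom.mem_ker]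
    rw [eq_bot_iff, Subgroup.commutator_le]
    intro k hk m hm
    have hmK : m ∈ K := hM.1 hm
    have hc : (⟨m, hmK⟩ : ↥K) ∈ Subgroup.center ↥K := by
      apply hcen; simpa [hM', Subgroup.mem_subgroupOf]
    have h1 := (Subgroup.mem_center_iff.mp hc) ⟨k, hk⟩
    have hcomm : k * m = m * k := congrArg Subtype.val h1
    open commutatorElement in have : ⁅k, m⁆ = 1 := commutatorElement_eq_one_iff_mul_comm.mpr hcomm
    simp [this]
  · -- M' maps onto K/Z, so K = M'·Z, so K/M' abelian, so M' ⊇ [K,K] = K, contradiction.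
    exfalso
    set p := QuotientGroup.mk' M' with hpdef
    have hrep : ∀ a : ↥K, ∃ z ∈ Subgroup.center ↥K, p a = p z := by
      intro a
      have hmem : q a ∈ Subgroup.map q M' := by rw [htop]; trivial
      obtain ⟨m, hm, hqm⟩ := hmem
      refine ⟨m⁻¹ * a, ?_, ?_⟩
      · rw [← QuotientGroup.ker_mk' (Subgroup.center ↥K), MonoidHom.mem_ker, ← hqdef]
        rw [map_mul, map_inv, hqm]
        simp
      · have hzm : p m = 1 := by
          rw [hpdef, ← MonoidHom.mem_ker, QuotientGroup.ker_mk']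
          exact hm
        have ha : a = m * (m⁻¹ * a) := by group
        rw [show p a = p (m * (m⁻¹ * a)) from by rw [← ha], map_mul, hzm, one_mul]
    have hab : ∀ a b : ↥K, p a * p b = p b * p a := by
      intro a b
      obtain ⟨z, hz, hpz⟩ := hrep a
      obtain ⟨w, hw, hpw⟩ := hrep b
      rw [hpz, hpw, ← map_mul, ← map_mul, Subgroup.mem_center_iff.mp hz w]
    have hM'top : M' = ⊤ := by
      rw [eq_top_iff, ← hq.1, _root_.commutator_def, Subgroup.commutator_le]
      intro a _ b _
      rw [← QuotientGroup.ker_mk' M', MonoidHom.mem_ker, ← hpdef, map_commutatorElement,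
        commutatorElement_eq_one_iff_mul_comm]
      exact hab a b
    apply hKM
    intro x hx
    have : (⟨x, hx⟩ : ↥K) ∈ M' := by rw [hM'top]; trivial
    simpa [hM', Subgroup.mem_subgroupOf] using this

/-- Key lemma: if `K` is quasisimple and subnormal in `L`, `M` is normal in `L`,
and `K ≰ M`, then `[K, M] = 1`. -/
lemma claimB {G : Type*} [Group G] {K L : Subgroup G} (hq : IsQuasisimple ↥K)
    (hKL : subnormalIn K L) : ∀ M : Subgroup G, normalIn M L → ¬ K ≤ M → ⁅K, M⁆ = ⊥ := by
  induction hKL with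
  | refl => exact fun M hM hKM => quasi_central hq hM hKM
  | @tail H L hKH hHL ih =>
    intro M hM hKM
    have hKleH : K ≤ H := subnormalIn_le hKH
    have hMH : normalIn (M ⊓ H) H := by
      refine ⟨inf_le_right, ?_⟩
      rintro k hk x ⟨hx1, hx2⟩
      exact ⟨hM.2 k (hHL.1 hk) x hx1, hHL.2 k (hHL.1 hk) x hx2⟩
    have h1 : ⁅K, M ⊓ H⁆ = ⊥ := ih (M ⊓ H) hMH (fun h => hKM (h.trans inf_le_left))
    have h2 : ⁅K, M⁆ ≤ M ⊓ H := by
      rw [Subgroup.commutator_le]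
      intro k hk m hm
      constructor
      · have hmm : k * m * k⁻¹ ∈ M := hM.2 k (hHL.1 (hKleH hk)) m hm
        have hmm2 : (k * m * k⁻¹) * m⁻¹ ∈ M := mul_mem hmm (inv_mem hm)
        simpa [commutatorElement_def] using hmm2
      · have h3 : m * k⁻¹ * m⁻¹ ∈ H := hHL.2 m (hM.1 hm) k⁻¹ (inv_mem (hKleH hk))
        have h4 : k * (m * k⁻¹ * m⁻¹) ∈ H := mul_mem (hKleH hk) h3
        have heq : k * m * k⁻¹ * m⁻¹ = k * (m * k⁻¹ * m⁻¹) := by group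
        simpa [commutatorElement_def, heq] using h4
    have h3 : ⁅⁅K, M⁆, K⁆ = ⊥ := by
      rw [eq_bot_iff, ← h1, Subgroup.commutator_comm ⁅K, M⁆ K]
      exact Subgroup.commutator_mono le_rfl h2
    have h4 : ⁅⁅M, K⁆, K⁆ = ⊥ := by rw [Subgroup.commutator_comm M K]; exact h3
    have h5 : ⁅⁅K, K⁆, M⁆ = ⊥ := Subgroup.commutator_commutator_eq_bot_of_rotate h3 h4
    rwa [commutator_self_eq hq] at h5

lemma main_aux {G : Type*} [Group G] {N L : Subgroup G} (hNL : subnormalIn N L) :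
    ∀ K : Subgroup G, subnormalIn K L → IsQuasisimple ↥K → K ≤ N ∨ ⁅K, N⁆ = ⊥ := by
  induction hNL with
  | refl => exact fun K hKN _ => Or.inl (subnormalIn_le hKN)
  | @tail M L hNM hML ih =>
    intro K hKL hq
    by_cases hKM : K ≤ M
    · have hsub : subnormalIn K M := by
        have h := subnormalIn_inf M hKL
        rwa [inf_eq_left.mpr hKM, inf_eq_right.mpr hML.1] at h
      exact ih K hsub hq
    · right
      have h := claimB hq hKL M hML hKM
      exact le_bot_iff.mp
        ((Subgroup.commutator_mono le_rfl (subnormalIn_le hNM)).trans h.le)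

theorem stmt7 {G : Type*} [Group G] [Finite G] (K N : Subgroup G)
    (hK : IsComponent K) (hN : _root_.IsSubnormal N) :
    K ≤ N ∨ ⁅K, N⁆ = (⊥ : Subgroup G) := by
  exact main_aux hN K hK.1 hK.2
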